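/- The Galkin quandle G(A, c₁, c₂) is involutory (a kei), i.e., (a*b)*b = a for all a,b, if and only if c₁ = c₂. -/
import Mathlib


/-- The function `μ` with `μ(0) = 2`, `μ(1) = μ(2) = -1`. -/
def galkinMu : ZMod 3 → ℤ := fun x => if x = 0 then 2 else -1

/-- The function `τ` with `τ(0) = 0`, `τ(1) = c₁`, `τ(2) = c₂`. -/
def galkinTau {A : Type*} [AddCommGroup A] (c₁ c₂ : A) : ZMod 3 → A :=
  fun x => if x = 1 then c₁ else if x = 2 then c₂ else 0

/-- The Galkin quandle operation on `ZMod 3 × A` for the quandle `G(A, c₁, c₂)`. -/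
def galkinOp {A : Type*} [AddCommGroup A] (c₁ c₂ : A) (p q : ZMod 3 × A) : ZMod 3 × A :=
  (2 * q.1 - p.1, -p.2 + galkinMu (p.1 - q.1) • q.2 + galkinTau c₁ c₂ (p.1 - q.1))

theorem stmt_16 {A : Type*} [AddCommGroup A] (c₁ c₂ : A) :
    (∀ p q : ZMod 3 × A, galkinOp c₁ c₂ (galkinOp c₁ c₂ p q) q = p) ↔ c₁ = c₂ := by
  constructor
  · intro h
    have := h (1, 0) (0, 0)
    simp +decide [galkinOp, galkinMu, galkinTau, Prod.ext_iff] at this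
    linear_combination (norm := abel_nf) -this
  · intro h q p
    subst h
    have hd : q.1 - p.1 = 0 ∨ q.1 - p.1 = 1 ∨ q.1 - p.1 = 2 := by
      have : ∀ x : ZMod 3, x = 0 ∨ x = 1 ∨ x = 2 := by decide
      exact this _
    have hd2 : 2 * p.1 - q.1 - p.1 = -(q.1 - p.1) := by ring
    ext
    · simp only [galkinOp]; ring
    · simp only [galkinOp, hd2]
      rcases hd with h | h | h <;>
        simp +decide [h, galkinMu, galkinTau, show (-(1:ZMod 3)) = 2 by decide,
          show (-(2:ZMod 3)) = 1 by decide] <;> abel
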